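/- Fix integers d ≥ 2 and n ≥ 1. If X ⊆ ℕⁿ is d-automatic, then the set {(k₁, …, kₙ) ∈ ℕⁿ : (d^{k₁}, …, d^{kₙ}) ∈ X} is definable in (ℕ,+). -/

import Mathlib

open FirstOrder

/-- A language is regular if it is recognized by a DFA with finitely many states. -/
def RegularLang {α : Type} (L : Set (List α)) : Prop :=
  ∃ (Q : Type) (_ : Fintype Q) (M : DFA α Q), M.accepts = L

/-- The first-order language with a single binary function symbol. -/
def plusLang : FirstOrder.Language where
  Functions := fun n => match n with | 2 => Unit | _ => Empty
  Relations := fun _ => Empty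

instance : plusLang.Structure ℕ where
  funMap {n} f x :=
    match n, f with
    | 2, _ => x 0 + x 1
  RelMap {n} r _ := nomatch r

/-- A set `S ⊆ ℕ^α` is definable in `(ℕ,+)` (parameters allowed). -/
def DefinableNatAdd {α : Type} (S : Set (α → ℕ)) : Prop :=
  Set.Definable (Set.univ : Set ℕ) plusLang S

/-- Evaluation of a word over ℤ base `d`, least significant digit first. -/
def evalZ (d : ℤ) : List ℤ → ℤ
  | [] => 0
  | k :: σ => k + d * evalZ d σ

/-- Coordinatewise evaluation of a word over `ℤ^n` base `d`. -/
def evalVec (d : ℤ) {n : ℕ} (σ : List (Fin n → ℤ)) : Fin n → ℤ :=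
  fun i => evalZ d (σ.map fun v => v i)

/-- `X ⊆ ℤ^n` is `d`-automatic: the language of all base-`d` representations of elements of `X`
over the alphabet `Σ±^n` is regular. -/
def AutomaticVec (d : ℕ) {n : ℕ} (X : Set (Fin n → ℤ)) : Prop :=
  RegularLang {σ : List (Fin n → ℤ) | (∀ v ∈ σ, ∀ i, (v i).natAbs ≤ d - 1) ∧ evalVec d σ ∈ X}

namespace Aux16
variable {n : ℕ}

def zL : Fin n → ℤ := fun _ => 0

def wordOf : ℕ → List (ℕ × (Fin n → ℤ)) → List (Fin n → ℤ)
  | _, [] => []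
  | pos, (t, a) :: rest => List.replicate (t - pos) zL ++ a :: wordOf (t+1) rest

lemma evalZ_append (d : ℤ) (l l' : List ℤ) :
    evalZ d (l ++ l') = evalZ d l + d ^ l.length * evalZ d l' := by
  induction l with
  | nil => simp [evalZ]
  | cons a l ih => simp [evalZ, ih]; ring

lemma evalZ_replicate (d : ℤ) (m : ℕ) : evalZ d (List.replicate m 0) = 0 := by
  induction m with
  | zero => simp [evalZ]
  | succ m ih => simp [List.replicate_succ, evalZ, ih]

lemma evalZ_wordOf (d : ℤ) (i : Fin n) :
    ∀ (evs : List (ℕ × (Fin n → ℤ))) (pos : ℕ),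
      List.Pairwise (fun e e' => e.1 < e'.1) evs → (∀ e ∈ evs, pos ≤ e.1) →
      evalZ d ((wordOf pos evs).map (fun v => v i))
        = (evs.map (fun e => e.2 i * d ^ (e.1 - pos))).sum := by
  intro evs
  induction evs with
  | nil => intro pos _ _; simp [wordOf, evalZ]
  | cons e rest ih =>
    obtain ⟨t, a⟩ := e
    intro pos hpw hpos
    have hpt : pos ≤ t := hpos (t, a) (by simp)
    have hrest : ∀ e ∈ rest, t + 1 ≤ e.1 := fun e he => (List.pairwise_cons.mp hpw).1 e he
    have ihr := ih (t+1) (List.pairwise_cons.mp hpw).2 hrest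
    simp only [wordOf, List.map_append, List.map_cons, List.map_replicate]
    rw [evalZ_append]
    have hz : (zL : Fin n → ℤ) i = 0 := rfl
    rw [hz, evalZ_replicate]
    simp only [List.length_replicate, zero_add, evalZ]
    rw [ihr, List.sum_cons]
    have key : ∀ e ∈ rest, e.2 i * d ^ (e.1 - (t+1)) * (d ^ (t - pos) * d) = e.2 i * d ^ (e.1 - pos) := by
      rintro ⟨s, b⟩ he
      have hts : t + 1 ≤ s := hrest (s, b) he
      have h1 : s - (t+1) + ((t - pos) + 1) = s - pos := by clear hpos hpw ihr hz ih hrest; omega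
      show b i * d ^ (s - (t+1)) * (d ^ (t - pos) * d) = b i * d ^ (s - pos)
      rw [← h1, pow_add, pow_succ]
      ring
    have hS2 : (rest.map (fun e => e.2 i * d ^ (e.1 - pos))).sum
        = (rest.map (fun e => e.2 i * d ^ (e.1 - (t+1)))).sum * (d ^ (t - pos) * d) := by
      rw [← List.sum_map_mul_right]
      exact (congrArg List.sum (List.map_congr_left key)).symm
    rw [hS2]
    ring

/-! ### canonical word of a power-tuple -/

def vals (k : Fin n → ℕ) : List ℕ := (Finset.image k Finset.univ).sort (· ≤ ·)

def letterOf (k : Fin n → ℕ) (v : ℕ) : Fin n → ℤ := fun i => if k i = v then 1 else 0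

def events (k : Fin n → ℕ) : List (ℕ × (Fin n → ℤ)) := (vals k).map (fun v => (v, letterOf k v))

def wrd (k : Fin n → ℕ) : List (Fin n → ℤ) := wordOf 0 (events k)

lemma events_pairwise (k : Fin n → ℕ) :
    List.Pairwise (fun e e' : ℕ × (Fin n → ℤ) => e.1 < e'.1) (events k) := by
  have h : List.Pairwise (· < ·) (vals k) := (Finset.sortedLT_sort _).pairwise
  exact List.Pairwise.map _ (fun a b hab => hab) h

lemma evalVec_wrd (d : ℤ) (k : Fin n → ℕ) : evalVec d (wrd k) = fun i => d ^ (k i) := by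
  funext i
  show evalZ d ((wrd k).map (fun v => v i)) = d ^ (k i)
  rw [wrd, evalZ_wordOf d i (events k) 0 (events_pairwise k) (fun _ _ => Nat.zero_le _)]
  rw [events, List.map_map]
  have h1 : ((vals k).map (fun v => (letterOf k v) i * d ^ (v - 0))).sum
      = ((vals k).map (fun v => if k i = v then d ^ v else 0)).sum := by
    apply congrArg List.sum
    apply List.map_congr_left
    intro v _
    by_cases h : k i = v <;> simp [letterOf, h]
  show ((vals k).map (fun v => (letterOf k v) i * d ^ (v - 0))).sum = _
  rw [h1]
  have h2 : List.Perm (vals k) (Finset.image k Finset.univ).toList := Finset.sort_perm_toList _ _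
  rw [List.Perm.sum_eq (List.Perm.map _ h2), Finset.sum_map_toList]
  rw [Finset.sum_ite_eq (Finset.image k Finset.univ) (k i) (fun v => d ^ v)]
  simp [Finset.mem_image_of_mem]

lemma mem_wordOf {v : Fin n → ℤ} :
    ∀ (evs : List (ℕ × (Fin n → ℤ))) (pos : ℕ), v ∈ wordOf pos evs →
      v = zL ∨ ∃ e ∈ evs, v = e.2 := by
  intro evs
  induction evs with
  | nil => intro pos h; simp [wordOf] at h
  | cons e rest ih =>
    obtain ⟨t, a⟩ := e
    intro pos h
    simp only [wordOf, List.mem_append, List.mem_cons] at h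
    rcases h with h | h | h
    · exact Or.inl (List.eq_of_mem_replicate h)
    · exact Or.inr ⟨(t, a), by simp, h⟩
    · rcases ih (t+1) h with h' | ⟨e, he, hv⟩
      · exact Or.inl h'
      · exact Or.inr ⟨e, by simp [he], hv⟩

lemma wrd_bounded (d : ℕ) (hd : 2 ≤ d) (k : Fin n → ℕ) :
    ∀ v ∈ wrd k, ∀ i, (v i).natAbs ≤ d - 1 := by
  intro v hv i
  rcases mem_wordOf _ _ hv with h | ⟨e, he, hv'⟩
  · subst h; simp [zL]
  · subst hv'
    rw [events] at he
    simp only [List.mem_map] at he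
    obtain ⟨w, _, hw⟩ := he
    rw [← hw]
    show ((letterOf k w) i).natAbs ≤ d - 1
    rw [letterOf]
    split <;> simp <;> omega


/-! ### automaton runs -/

section Automaton
variable {Q : Type} (M : DFA (Fin n → ℤ) Q)

def step0 : Q → Q := fun q => M.step q zL

def runL : Q → List (Fin n → ℤ) → List ℕ → Q
  | q, [], _ => q
  | q, _ :: _, [] => q
  | q, a :: as, c :: cs => runL (M.step ((step0 M)^[c] q) a) as cs

def gapsF : ℕ → List (ℕ × (Fin n → ℤ)) → List ℕ
  | _, [] => []
  | pos, (t, _) :: rest => (t - pos) :: gapsF (t+1) rest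

def gapsN : ℕ → List ℕ → List ℕ
  | _, [] => []
  | pos, t :: ts => (t - pos) :: gapsN (t+1) ts

lemma gapsF_eq {β : Type} (u : β → ℕ) (w : β → Fin n → ℤ) :
    ∀ (l : List β) (pos : ℕ), gapsF pos (l.map (fun x => (u x, w x))) = gapsN pos (l.map u) := by
  intro l
  induction l with
  | nil => intro pos; rfl
  | cons x xs ih => intro pos; simp [gapsF, gapsN, ih]

lemma gapsN_length : ∀ (l : List ℕ) (pos : ℕ), (gapsN pos l).length = l.length := by
  intro l
  induction l with
  | nil => intro pos; rfl
  | cons x xs ih => intro pos; simp [gapsN, ih]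

lemma foldl_replicate_zL : ∀ (m : ℕ) (q : Q),
    (List.replicate m (zL : Fin n → ℤ)).foldl M.step q = (step0 M)^[m] q := by
  intro m
  induction m with
  | zero => intro q; rfl
  | succ m ih =>
    intro q
    rw [List.replicate_succ, List.foldl_cons, ih, Function.iterate_succ_apply]
    rfl

lemma evalFrom_wordOf :
    ∀ (evs : List (ℕ × (Fin n → ℤ))) (pos : ℕ) (q : Q),
      M.evalFrom q (wordOf pos evs) = runL M q (evs.map Prod.snd) (gapsF pos evs) := by
  intro evs
  induction evs with
  | nil => intro pos q; rfl
  | cons e rest ih =>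
    obtain ⟨t, a⟩ := e
    intro pos q
    show M.evalFrom q (List.replicate (t - pos) zL ++ a :: wordOf (t+1) rest) = _
    have : M.evalFrom q (List.replicate (t - pos) zL ++ a :: wordOf (t+1) rest)
        = M.evalFrom (M.step ((step0 M)^[t - pos] q) a) (wordOf (t+1) rest) := by
      show List.foldl M.step q _ = _
      rw [List.foldl_append, List.foldl_cons, foldl_replicate_zL]
      rfl
    rw [this, ih]
    rfl

/-! ### periodicity of iterates on a finite type -/

def rho (N p t : ℕ) : ℕ := if t < N then t else N + (t - N) % p

lemma rho_lt {N p : ℕ} (hN : 0 < N) (hp : 0 < p) (t : ℕ) : rho N p t < N + p := by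
  rw [rho]; split
  · omega
  · have := Nat.mod_lt (t - N) hp; omega

lemma rho_eq_iff {N p : ℕ} (hp : 0 < p) (x c : ℕ) (hc : c < N + p) :
    rho N p x = c ↔ (if c < N then x = c else ∃ t, x = c + p * t) := by
  rw [rho]
  split_ifs with hx hcN hcN
  · omega
  · constructor
    · intro h; omega
    · rintro ⟨t, rfl⟩; omega
  · constructor
    · intro h; omega
    · intro h; omega
  · push_neg at hx hcN
    constructor
    · intro h
      refine ⟨(x - N) / p, ?_⟩
      have h2 := Nat.mod_add_div (x - N) p
      omega
    · rintro ⟨t, rfl⟩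
      have h2 : (c + p * t - N) = (c - N) + p * t := by omega
      rw [h2, Nat.add_mul_mod_self_left, Nat.mod_eq_of_lt (by omega)]
      omega

lemma iterate_eventually_periodic [Fintype Q] (f : Q → Q) (q : Q) (t : ℕ) :
    f^[rho (Fintype.card Q) (Nat.factorial (Fintype.card Q)) t] q = f^[t] q := by
  set N := Fintype.card Q with hN
  set p := Nat.factorial N with hp
  -- find a < b ≤ N with f^[a] q = f^[b] q
  obtain ⟨i, j, hne, hij⟩ : ∃ i j : Fin (N + 1), i ≠ j ∧ f^[i] q = f^[j] q := by
    have hcard : Fintype.card Q < Fintype.card (Fin (N + 1)) := by simp [hN]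
    obtain ⟨i, j, hij, hne⟩ := Fintype.exists_ne_map_eq_of_card_lt
      (fun i : Fin (N + 1) => f^[(i : ℕ)] q) hcard
    exact ⟨i, j, hij, hne⟩
  obtain ⟨a, b, hab, hbN, heq⟩ : ∃ a b : ℕ, a < b ∧ b ≤ N ∧ f^[a] q = f^[b] q := by
    rcases lt_or_gt_of_ne hne with h | h
    · exact ⟨i, j, h, Nat.lt_succ_iff.mp j.isLt, hij⟩
    · exact ⟨j, i, h, Nat.lt_succ_iff.mp i.isLt, hij.symm⟩
  have key1 : ∀ s : ℕ, f^[a + s + (b - a)] q = f^[a + s] q := by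
    intro s
    have e1 : a + s + (b - a) = s + b := by omega
    have e2 : a + s = s + a := by omega
    rw [e1, e2, Function.iterate_add_apply, Function.iterate_add_apply, heq]
  have key : ∀ (c s : ℕ), f^[a + s + c * (b - a)] q = f^[a + s] q := by
    intro c
    induction c with
    | zero => intro s; simp
    | succ c ih =>
      intro s
      have e1 : a + s + (c + 1) * (b - a) = a + (s + c * (b - a)) + (b - a) := by ring
      rw [e1, key1 (s + c * (b - a)), ← Nat.add_assoc, ih s]
  rw [rho]
  split_ifs with hx
  · rfl
  · push_neg at hx
    set s := t - N with hs
    obtain ⟨m, hm⟩ : (b - a) ∣ p := Nat.dvd_factorial (by omega) (by omega)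
    have h2 : s % p + p * (s / p) = s := Nat.mod_add_div s p
    have h3 : (s / p * m) * (b - a) = p * (s / p) := by rw [hm]; ring
    have e1 : N + s % p = a + (N - a + s % p) := by omega
    have e2 : t = a + (N - a + s % p) + (s / p * m) * (b - a) := by omega
    rw [e1, e2, key]


lemma runL_rho [Fintype Q] (N p : ℕ) (hN : N = Fintype.card Q) (hp : p = Nat.factorial N) :
    ∀ (as : List (Fin n → ℤ)) (cs : List ℕ) (q : Q),
      runL M q as cs = runL M q as (cs.map (rho N p)) := by
  subst hN hp
  intro as
  induction as with
  | nil => intro cs q; cases cs <;> rfl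
  | cons a as ih =>
    intro cs q
    cases cs with
    | nil => rfl
    | cons c cs =>
      show runL M (M.step ((step0 M)^[c] q) a) as cs = runL M (M.step ((step0 M)^[rho _ _ c] q) a) as (cs.map _)
      rw [iterate_eventually_periodic (step0 M) q c, ih]

end Automaton

/-! ### order types -/

section OrderType
variable (π : Fin n → Fin n)

def Cpi : Set (Fin n → ℕ) := {k | ∀ i i', k i ≤ k i' ↔ π i ≤ π i'}

def Lv : List (Fin n) := (Finset.image π Finset.univ).sort (· ≤ ·)

noncomputable def rep : Fin n → Fin n := fun ℓ => if h : ∃ i, π i = ℓ then h.choose else ℓ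

def chi (ℓ : Fin n) : Fin n → ℤ := fun i => if π i = ℓ then 1 else 0

lemma exists_Cpi (hn : 1 ≤ n) (k : Fin n → ℕ) : ∃ π : Fin n → Fin n, k ∈ Cpi π := by
  have hcard : ∀ i, (Finset.univ.filter (fun i' => k i' < k i)).card < n := by
    intro i
    have hsub : Finset.univ.filter (fun i' => k i' < k i) ⊆ Finset.univ.erase i := by
      intro j hj
      simp only [Finset.mem_filter] at hj
      refine Finset.mem_erase.mpr ⟨?_, Finset.mem_univ _⟩
      rintro rfl; exact absurd hj.2 (lt_irrefl _)
    calc (Finset.univ.filter (fun i' => k i' < k i)).card ≤ (Finset.univ.erase i).card :=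
          Finset.card_le_card hsub
      _ = n - 1 := by rw [Finset.card_erase_of_mem (Finset.mem_univ _)]; simp
      _ < n := by omega
  refine ⟨fun i => ⟨(Finset.univ.filter (fun i' => k i' < k i)).card, hcard i⟩, ?_⟩
  intro i i'
  constructor
  · intro h
    show (Finset.univ.filter (fun j => k j < k i)).card ≤ (Finset.univ.filter (fun j => k j < k i')).card
    apply Finset.card_le_card
    intro j hj
    simp only [Finset.mem_filter] at hj ⊢
    exact ⟨hj.1, lt_of_lt_of_le hj.2 h⟩
  · intro h
    by_contra hlt
    push_neg at hlt
    have : (Finset.univ.filter (fun j => k j < k i')).card < (Finset.univ.filter (fun j => k j < k i)).card := by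
      apply Finset.card_lt_card
      constructor
      · intro j hj
        simp only [Finset.mem_filter] at hj ⊢
        exact ⟨hj.1, lt_trans hj.2 hlt⟩
      · intro hsub
        have : i' ∈ Finset.univ.filter (fun j => k j < k i) := by
          simp only [Finset.mem_filter]; exact ⟨Finset.mem_univ _, hlt⟩
        have := hsub this
        simp only [Finset.mem_filter] at this
        exact absurd this.2 (lt_irrefl _)
    have hle : ((⟨_, hcard i⟩ : Fin n) : ℕ) ≤ ((⟨_, hcard i'⟩ : Fin n) : ℕ) := h
    simp only [Fin.val_mk] at hle
    omega

variable {π}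

lemma rep_spec' {ℓ : Fin n} (h : ∃ i, π i = ℓ) : π (rep π ℓ) = ℓ := by
  rw [rep, dif_pos h]; exact h.choose_spec

lemma rep_spec {ℓ : Fin n} (hℓ : ℓ ∈ Lv π) : π (rep π ℓ) = ℓ := by
  rw [Lv, Finset.mem_sort] at hℓ
  obtain ⟨i, _, rfl⟩ := Finset.mem_image.mp hℓ
  exact rep_spec' ⟨i, rfl⟩

lemma Cpi_eq_iff {k : Fin n → ℕ} (hk : k ∈ Cpi π) (i i' : Fin n) : k i = k i' ↔ π i = π i' := by
  constructor
  · intro h; exact le_antisymm ((hk i i').mp h.le) ((hk i' i).mp h.ge)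
  · intro h; exact le_antisymm ((hk i i').mpr h.le) ((hk i' i).mpr h.ge)

lemma Cpi_lt_iff {k : Fin n → ℕ} (hk : k ∈ Cpi π) (i i' : Fin n) : k i < k i' ↔ π i < π i' := by
  simp only [lt_iff_not_ge]
  rw [hk i' i]

lemma vals_eq {k : Fin n → ℕ} (hk : k ∈ Cpi π) :
    vals k = (Lv π).map (fun ℓ => k (rep π ℓ)) := by
  have hLv_sorted : List.Pairwise (· < ·) (Lv π) := (Finset.sortedLT_sort _).pairwise
  have hmono : ∀ ℓ ∈ Lv π, ∀ ℓ' ∈ Lv π, ℓ < ℓ' → k (rep π ℓ) < k (rep π ℓ') := by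
    intro ℓ hℓ ℓ' hℓ' hlt
    rw [Cpi_lt_iff hk, rep_spec hℓ, rep_spec hℓ']
    exact hlt
  have hsorted : List.Pairwise (· < ·) ((Lv π).map (fun ℓ => k (rep π ℓ))) := by
    rw [List.pairwise_map]
    exact List.Pairwise.imp_of_mem (fun ha hb h => hmono _ ha _ hb h) hLv_sorted
  have hnodupR : ((Lv π).map (fun ℓ => k (rep π ℓ))).Nodup := by
    refine List.Nodup.map_on ?_ (Finset.sort_nodup _ _)
    intro ℓ hℓ ℓ' hℓ' h
    have := (Cpi_eq_iff hk _ _).mp h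
    rwa [rep_spec hℓ, rep_spec hℓ'] at this
  have htoF : ((Lv π).map (fun ℓ => k (rep π ℓ))).toFinset = Finset.image k Finset.univ := by
    ext x
    simp only [List.mem_toFinset, List.mem_map, Finset.mem_image, Finset.mem_univ, true_and]
    constructor
    · rintro ⟨ℓ, hℓ, rfl⟩
      exact ⟨rep π ℓ, rfl⟩
    · rintro ⟨i, rfl⟩
      refine ⟨π i, ?_, ?_⟩
      · rw [Lv, Finset.mem_sort]
        exact Finset.mem_image_of_mem _ (Finset.mem_univ _)
      · exact (Cpi_eq_iff hk _ _).mpr (rep_spec' ⟨i, rfl⟩)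
  have hperm : List.Perm (vals k) ((Lv π).map (fun ℓ => k (rep π ℓ))) := by
    refine List.perm_of_nodup_nodup_toFinset_eq (Finset.sort_nodup _ _) hnodupR ?_
    rw [htoF, vals, Finset.sort_toFinset]
  exact List.Perm.eq_of_pairwise' (Finset.pairwise_sort _ _) (hsorted.imp le_of_lt) hperm

lemma events_eq {k : Fin n → ℕ} (hk : k ∈ Cpi π) :
    events k = (Lv π).map (fun ℓ => (k (rep π ℓ), chi π ℓ)) := by
  rw [events, vals_eq hk, List.map_map]
  refine List.map_congr_left ?_
  intro ℓ hℓ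
  show (k (rep π ℓ), letterOf k (k (rep π ℓ))) = (k (rep π ℓ), chi π ℓ)
  congr 1
  funext i
  show (if k i = k (rep π ℓ) then (1:ℤ) else 0) = if π i = ℓ then 1 else 0
  have : (k i = k (rep π ℓ)) ↔ (π i = ℓ) := by
    rw [Cpi_eq_iff hk, rep_spec hℓ]
  simp only [this]

end OrderType


/-! ### Presburger formulas -/

abbrev U : Set ℕ := Set.univ

def varT {α : Type} (x : α) : (plusLang[[U]]).Term (α ⊕ Fin 1) := Language.Term.var (Sum.inl x)
def bvT {α : Type} : (plusLang[[U]]).Term (α ⊕ Fin 1) := Language.Term.var (Sum.inr 0)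
def addT {α : Type} (t₁ t₂ : (plusLang[[U]]).Term α) : (plusLang[[U]]).Term α :=
  Language.Term.func (l := 2) (Sum.inl (() : plusLang.Functions 2)) ![t₁, t₂]
def constT {α : Type} (e : ℕ) : (plusLang[[U]]).Term α :=
  ((plusLang.con (⟨e, trivial⟩ : U)).term)
def nmulT {α : Type} : ℕ → (plusLang[[U]]).Term α → (plusLang[[U]]).Term α
  | 0, _ => constT 0
  | m+1, t => addT t (nmulT m t)

@[simp] lemma realize_addT {α : Type} (t₁ t₂ : (plusLang[[U]]).Term α) (v : α → ℕ) :
    (addT t₁ t₂).realize v = t₁.realize v + t₂.realize v := by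
  simp [addT, Language.withConstants_funMap_sumInl]
  rfl

@[simp] lemma realize_constT {α : Type} (e : ℕ) (v : α → ℕ) :
    (constT (α := α) e).realize v = e := by
  simp [constT, Language.Term.realize_con]

@[simp] lemma realize_nmulT {α : Type} (m : ℕ) (t : (plusLang[[U]]).Term α) (v : α → ℕ) :
    (nmulT m t).realize v = m * t.realize v := by
  induction m with
  | zero => simp [nmulT]
  | succ m ih => simp [nmulT, ih]; ring

def A2set (a b : Fin n) (e p : ℕ) : Set (Fin n → ℕ) :=
  {k | ∃ t, k a = k b + (e + p * t)}

lemma A2_def (a b : Fin n) (e p : ℕ) : Set.Definable U plusLang (A2set a b e p) := by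
  refine ⟨((varT a).bdEqual (addT (varT b) (addT (constT e) (nmulT p bvT)))).ex, ?_⟩
  ext k
  simp [A2set, varT, bvT, Language.BoundedFormula.realize_ex, Language.Formula.Realize, Fin.snoc]

def A1set (a : Fin n) (e p : ℕ) : Set (Fin n → ℕ) :=
  {k | ∃ t, k a = e + p * t}

lemma A1_def (a : Fin n) (e p : ℕ) : Set.Definable U plusLang (A1set a e p) := by
  refine ⟨((varT a).bdEqual (addT (constT e) (nmulT p bvT))).ex, ?_⟩
  ext k
  simp [A1set, varT, bvT, Language.BoundedFormula.realize_ex, Language.Formula.Realize, Fin.snoc]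

/-! ### the gap-condition sets -/

def CondAux (N p : ℕ) : Option (Fin n) → List (Fin n) → List ℕ → Set (Fin n → ℕ)
  | _, [], [] => Set.univ
  | _, [], _ :: _ => ∅
  | _, _ :: _, [] => ∅
  | none, a :: as, c :: cs =>
      (if c < N then {k | k a = c} else {k | ∃ t, k a = c + p * t}) ∩ CondAux N p (some a) as cs
  | some b, a :: as, c :: cs =>
      (if c < N then {k | k a = k b + (c+1)} else {k | ∃ t, k a = k b + (c+1+p*t)})
        ∩ CondAux N p (some a) as cs

lemma condAux_def (N p : ℕ) :
    ∀ (l : List (Fin n)) (prev : Option (Fin n)) (cs : List ℕ),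
      Set.Definable U plusLang (CondAux N p prev l cs) := by
  intro l
  induction l with
  | nil =>
    intro prev cs
    cases prev <;> cases cs <;> simp [CondAux]
  | cons a as ih =>
    intro prev cs
    cases cs with
    | nil => cases prev <;> simp [CondAux]
    | cons c cs =>
      cases prev with
      | none =>
        refine Set.Definable.inter ?_ (ih (some a) cs)
        split_ifs
        · have : {k : Fin n → ℕ | k a = c} = A1set a c 0 := by
            ext k; simp [A1set]
          rw [this]; exact A1_def a c 0
        · exact A1_def a c p
      | some b =>
        refine Set.Definable.inter ?_ (ih (some a) cs)
        split_ifs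
        · have : {k : Fin n → ℕ | k a = k b + (c+1)} = A2set a b (c+1) 0 := by
            ext k; simp [A2set]
          rw [this]; exact A2_def a b (c+1) 0
        · exact A2_def a b (c+1) p

def posOf (k : Fin n → ℕ) : Option (Fin n) → ℕ
  | none => 0
  | some b => k b + 1

lemma condAux_spec (N p : ℕ) (hp : 0 < p) :
    ∀ (l : List (Fin n)) (cs : List ℕ) (prev : Option (Fin n)) (k : Fin n → ℕ),
      (∀ c ∈ cs, c < N + p) → l.Chain' (fun a b => k a < k b) →
      (∀ b a, prev = some b → l.head? = some a → k b < k a) →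
      (k ∈ CondAux N p prev l cs ↔ (gapsN (posOf k prev) (l.map k)).map (rho N p) = cs) := by
  intro l
  induction l with
  | nil =>
    intro cs prev k hcs _ _
    cases cs <;> cases prev <;> simp [CondAux, gapsN]
  | cons a as ih =>
    intro cs prev k hcs hchain hhead
    cases cs with
    | nil => cases prev <;> simp [CondAux, gapsN]
    | cons c cs =>
      have hc : c < N + p := hcs c (by simp)
      have hcs' : ∀ c' ∈ cs, c' < N + p := fun c' h => hcs c' (by simp [h])
      have hchain' : as.Chain' (fun a b => k a < k b) := (List.isChain_cons.mp hchain).2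
      have hhead' : ∀ b a', some a = some b → as.head? = some a' → k b < k a' := by
        intro b a' hba ha'
        obtain rfl : a = b := Option.some_injective _ hba
        exact (List.isChain_cons.mp hchain).1 a' ha'
      have ihr := ih cs (some a) k hcs' hchain' hhead'
      have hrho := rho_eq_iff (N := N) hp (k a - posOf k prev) c hc
      have tail_eq : gapsN (posOf k prev) ((a :: as).map k)
          = (k a - posOf k prev) :: gapsN (k a + 1) (as.map k) := rfl
      rw [tail_eq, List.map_cons]
      have hsplit : ((rho N p (k a - posOf k prev) :: (gapsN (k a + 1) (as.map k)).map (rho N p))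
          = c :: cs) ↔ (rho N p (k a - posOf k prev) = c ∧
            (gapsN (k a + 1) (as.map k)).map (rho N p) = cs) := by
        constructor
        · intro h; exact ⟨(List.cons.injEq _ _ _ _ ▸ h).1, (List.cons.injEq _ _ _ _ ▸ h).2⟩
        · rintro ⟨h1, h2⟩; rw [h1, h2]
      rw [hsplit]
      cases prev with
      | none =>
        show k ∈ (if c < N then {k : Fin n → ℕ | k a = c}
            else {k | ∃ t, k a = c + p * t}) ∩ CondAux N p (some a) as cs ↔ _
        rw [Set.mem_inter_iff, ihr]
        have hpos : posOf k (none : Option (Fin n)) = 0 := rfl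
        rw [hpos] at hrho ⊢
        show (k ∈ _) ∧ _ ↔ _
        constructor
        · rintro ⟨h1, h2⟩
          refine ⟨?_, h2⟩
          rw [hrho]
          split_ifs with hcN
          · rw [if_pos hcN] at h1; simpa using h1
          · rw [if_neg hcN] at h1; simpa using h1
        · rintro ⟨h1, h2⟩
          refine ⟨?_, h2⟩
          rw [hrho] at h1
          split_ifs at h1 ⊢ with hcN
          · simpa using h1
          · simpa using h1
      | some b =>
        have hb : k b < k a := hhead b a rfl rfl
        show k ∈ (if c < N then {k : Fin n → ℕ | k a = k b + (c+1)}
            else {k | ∃ t, k a = k b + (c+1+p*t)}) ∩ CondAux N p (some a) as cs ↔ _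
        rw [Set.mem_inter_iff, ihr]
        have hpos : posOf k (some b) = k b + 1 := rfl
        rw [hpos] at hrho ⊢
        constructor
        · rintro ⟨h1, h2⟩
          refine ⟨?_, h2⟩
          rw [hrho]
          split_ifs at h1 ⊢ with hcN
          · have : k a = k b + (c+1) := h1
            omega
          · obtain ⟨t, ht⟩ := h1
            refine ⟨t, ?_⟩
            have hx : p * t = p * t := rfl
            generalize hgen : p * t = x at ht ⊢
            omega
        · rintro ⟨h1, h2⟩
          refine ⟨?_, h2⟩
          rw [hrho] at h1
          split_ifs at h1 ⊢ with hcN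
          · show k a = k b + (c+1)
            omega
          · obtain ⟨t, ht⟩ := h1
            refine ⟨t, ?_⟩
            generalize hgen : p * t = x at ht ⊢
            omega


/-! ### Cpi is definable -/

lemma LEset_eq (i i' : Fin n) : {k : Fin n → ℕ | k i ≤ k i'} = A2set i' i 0 1 := by
  ext k
  simp only [A2set, Set.mem_setOf_eq, zero_add, one_mul]
  exact ⟨fun h => ⟨k i' - k i, by omega⟩, fun ⟨t, ht⟩ => by omega⟩

lemma Cpi_definable (π : Fin n → Fin n) : Set.Definable U plusLang (Cpi π) := by
  have hCpi : Cpi π = ⋂ y ∈ (Finset.univ : Finset (Fin n × Fin n)),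
      (if π y.1 ≤ π y.2 then {k : Fin n → ℕ | k y.1 ≤ k y.2} else {k | k y.1 ≤ k y.2}ᶜ) := by
    ext k
    simp only [Set.mem_iInter, Cpi, Set.mem_setOf_eq]
    constructor
    · intro h y _
      split_ifs with hy
      · exact (h y.1 y.2).mpr hy
      · intro hc
        exact hy ((h y.1 y.2).mp hc)
    · intro h i i'
      have := h (i, i') (Finset.mem_univ _)
      constructor
      · intro hle
        by_contra hc
        rw [if_neg hc] at this
        exact this hle
      · intro hle
        rwa [if_pos hle] at this
  rw [hCpi]
  apply Set.definable_biInter_finset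
  intro y
  split_ifs
  · rw [LEset_eq]; exact A2_def _ _ _ _
  · rw [LEset_eq]; exact (A2_def _ _ _ _).compl

/-! ### main acceptance characterization -/

section Main
variable {Q : Type} [Fintype Q] (M : DFA (Fin n → ℤ) Q)

lemma chain_reps {π : Fin n → Fin n} {k : Fin n → ℕ} (hk : k ∈ Cpi π) :
    List.Chain' (fun a b => k a < k b) ((Lv π).map (rep π)) := by
  show List.IsChain _ _
  rw [List.isChain_map]
  apply List.Pairwise.isChain
  refine List.Pairwise.imp_of_mem ?_ ((Finset.sortedLT_sort _).pairwise : List.Pairwise (· < ·) (Lv π))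
  intro ℓ ℓ' hℓ hℓ' hlt
  rw [Cpi_lt_iff hk, rep_spec hℓ, rep_spec hℓ']
  exact hlt

lemma mem_S_iff (d : ℕ) (hd : 2 ≤ d) (X : Set (Fin n → ℤ))
    (hM : M.accepts = {σ : List (Fin n → ℤ) |
      (∀ v ∈ σ, ∀ i, (v i).natAbs ≤ d - 1) ∧ evalVec d σ ∈ X})
    {π : Fin n → Fin n} {k : Fin n → ℕ} (hk : k ∈ Cpi π) :
    ((fun i => (d:ℤ) ^ (k i)) ∈ X) ↔
      runL M M.start ((Lv π).map (chi π))
        ((gapsN 0 (((Lv π).map (rep π)).map k)).map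
          (rho (Fintype.card Q) (Nat.factorial (Fintype.card Q)))) ∈ M.accept := by
  have h1 : ((fun i => (d:ℤ) ^ (k i)) ∈ X) ↔ wrd k ∈ M.accepts := by
    rw [hM]
    constructor
    · intro h
      exact ⟨wrd_bounded d hd k, by rw [evalVec_wrd]; exact h⟩
    · rintro ⟨-, h⟩
      rwa [evalVec_wrd] at h
  rw [h1, DFA.mem_accepts, wrd]
  show M.evalFrom M.start (wordOf 0 (events k)) ∈ M.accept ↔ _
  rw [evalFrom_wordOf, events_eq hk]
  have h2 : ((Lv π).map (fun ℓ => (k (rep π ℓ), chi π ℓ))).map Prod.snd = (Lv π).map (chi π) := by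
    rw [List.map_map]; rfl
  have h3 : gapsF 0 ((Lv π).map (fun ℓ => (k (rep π ℓ), chi π ℓ)))
      = gapsN 0 (((Lv π).map (rep π)).map k) := by
    rw [gapsF_eq, List.map_map]; rfl
  rw [h2, h3, ← runL_rho M _ _ rfl rfl]

end Main

end Aux16

set_option maxHeartbeats 1000000 in
theorem stmt16 (d : ℕ) (hd : 2 ≤ d) (n : ℕ) (hn : 1 ≤ n)
    (X : Set (Fin n → ℤ)) (hXnonneg : ∀ x ∈ X, ∀ i, 0 ≤ x i)
    (hX : AutomaticVec d X) :
    DefinableNatAdd {k : Fin n → ℕ | (fun i => (d : ℤ) ^ (k i)) ∈ X} := by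
  classical
  obtain ⟨Q, instQ, M, hM⟩ := hX
  haveI := instQ
  haveI : Nonempty Q := ⟨M.start⟩
  set N := Fintype.card Q with hNdef
  set p := Nat.factorial N with hpdef
  have hN0 : 0 < N := Fintype.card_pos
  have hp0 : 0 < p := Nat.factorial_pos N
  set csOf : (Fin n → Fin n) → (Fin n → Fin (N + p)) → List ℕ :=
    fun π c => (((List.finRange n).map (fun j => (c j).val)).take (Aux16.Lv π).length)
    with hcsOf
  have key : ∀ (π : Fin n → Fin n) (k : Fin n → ℕ), k ∈ Aux16.Cpi π →
      ∀ cs : List ℕ, (∀ x ∈ cs, x < N + p) →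
      (k ∈ Aux16.CondAux N p none ((Aux16.Lv π).map (Aux16.rep π)) cs ↔
        (Aux16.gapsN 0 (((Aux16.Lv π).map (Aux16.rep π)).map k)).map (Aux16.rho N p) = cs) := by
    intro π k hk cs hcs
    exact Aux16.condAux_spec N p hp0 _ cs none k hcs (Aux16.chain_reps hk)
      (by rintro b a ⟨⟩)
  have hSU : {k : Fin n → ℕ | (fun i => (d : ℤ) ^ (k i)) ∈ X} =
      ⋃ π ∈ (Finset.univ : Finset (Fin n → Fin n)),
        ⋃ c ∈ (Finset.univ : Finset (Fin n → Fin (N + p))),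
          (Aux16.Cpi π ∩
            (if runCond : Aux16.runL M M.start ((Aux16.Lv π).map (Aux16.chi π)) (csOf π c)
                ∈ M.accept then
              Aux16.CondAux N p none ((Aux16.Lv π).map (Aux16.rep π)) (csOf π c) else ∅)) := by
    ext k
    simp only [Set.mem_iUnion, Finset.mem_univ, exists_true_left, Set.mem_inter_iff,
      exists_prop, true_and]
    constructor
    · intro hkS
      obtain ⟨π, hk⟩ := Aux16.exists_Cpi hn k
      set RG := (Aux16.gapsN 0 (((Aux16.Lv π).map (Aux16.rep π)).map k)).map (Aux16.rho N p)
        with hRG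
      have hRGlt : ∀ x ∈ RG, x < N + p := by
        intro x hx
        rw [hRG] at hx
        simp only [List.mem_map] at hx
        obtain ⟨g, -, rfl⟩ := hx
        exact Aux16.rho_lt hN0 hp0 g
      have hRGlen : RG.length = (Aux16.Lv π).length := by
        simp [hRG, Aux16.gapsN_length]
      have hrn : (Aux16.Lv π).length ≤ n := by
        rw [Aux16.Lv, Finset.length_sort]
        calc (Finset.image π Finset.univ).card ≤ (Finset.univ : Finset (Fin n)).card :=
              Finset.card_image_le
          _ = n := by simp
      refine ⟨π, fun j => if h : (j : ℕ) < RG.length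
          then ⟨RG[(j : ℕ)]'h, hRGlt _ (List.getElem_mem _)⟩ else ⟨0, by omega⟩, hk, ?_⟩
      set c : Fin n → Fin (N + p) := fun j => if h : (j : ℕ) < RG.length
          then ⟨RG[(j : ℕ)]'h, hRGlt _ (List.getElem_mem _)⟩ else ⟨0, by omega⟩ with hc
      have hcs : csOf π c = RG := by
        apply List.ext_getElem
        · simp only [hcsOf, List.length_take, List.length_map, List.length_finRange]
          omega
        · intro i h1 h2
          have hin : i < n := by
            simp only [hcsOf, List.length_take, List.length_map, List.length_finRange] at h1
            omega
          have hiRG : i < RG.length := by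
            simp only [hcsOf, List.length_take, List.length_map, List.length_finRange] at h1
            omega
          simp only [hcsOf, List.getElem_take, List.getElem_map, List.getElem_finRange]
          simp only [hc, Fin.coe_cast]
          exact congrArg Fin.val (dif_pos hiRG)
      rw [dif_pos ?_]
      · exact (key π k hk (csOf π c) (by rw [hcs]; exact hRGlt)).mpr (by rw [hcs])
      · rw [hcs]
        exact (Aux16.mem_S_iff M d hd X hM hk).mp hkS
    · rintro ⟨π, c, hk, hcond⟩
      split_ifs at hcond with hacc
      · have hcsb : ∀ x ∈ csOf π c, x < N + p := by
          intro x hx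
          rw [hcsOf] at hx
          have hx' := List.mem_of_mem_take hx
          simp only [List.mem_map] at hx'
          obtain ⟨j, -, rfl⟩ := hx'
          exact (c j).isLt
        have hgaps := (key π k hk (csOf π c) hcsb).mp hcond
        exact (Aux16.mem_S_iff M d hd X hM hk).mpr (by rw [hgaps]; exact hacc)
      · exact absurd hcond (Set.notMem_empty k)
  show Set.Definable (Set.univ : Set ℕ) plusLang _
  rw [hSU]
  apply Set.definable_biUnion_finset
  intro π
  apply Set.definable_biUnion_finset
  intro c
  apply Set.Definable.inter (Aux16.Cpi_definable π)
  split_ifs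
  · exact Aux16.condAux_def N p _ _ _
  · exact Set.definable_empty
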